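/- arXiv:2101.00776 — 5 statements merged into one kernel-verified Lean document; each statement's English description precedes it below -/
import Mathlib

section
/- Let B be a complete nonarchimedean normed commutative ring (a complete normed commutative ring whose norm satisfies the ultrametric inequality ‖x+y‖ ≤ max(‖x‖,‖y‖) and ‖xy‖ ≤ ‖x‖·‖y‖). Let ψ : B → B be a continuous ring homomorphism, let a ∈ B satisfy ψ(a) = a and ‖a − 1‖ < 1, and let (cᵢ)_{i≥0} be a sequence in B with c₀ = 1, ‖cᵢ‖ ≤ 1 for all i, and ψ(cᵢ) = cᵢ + cᵢ₋₁ for all i ≥ 1. Then the series u = Σ_{i≥0} cᵢ (a−1)ⁱ converges in B, its sum u is a unit of B, and ψ(u) = a·u. -/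
/-- Abstract form of the paper's Lemma `lem:kisin`: in a complete nonarchimedean
normed commutative ring `B`, given a continuous ring endomorphism `ψ`, an element
`a` fixed by `ψ` with `‖a - 1‖ < 1`, and a sequence `cᵢ` with `c₀ = 1`, `‖cᵢ‖ ≤ 1`
and `ψ(cᵢ) = cᵢ + cᵢ₋₁`, the series `u = Σ cᵢ (a-1)ⁱ` converges, its sum is a
unit, and `ψ(u) = a·u`. -/
theorem kisin_lemma_abstract {B : Type*} [NormedCommRing B] [CompleteSpace B]
    (hna : ∀ x y : B, ‖x + y‖ ≤ max ‖x‖ ‖y‖)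
    (ψ : B →+* B) (hψ : Continuous ψ)
    (a : B) (ha : ψ a = a) (ha1 : ‖a - 1‖ < 1)
    (c : ℕ → B) (hc0 : c 0 = 1) (hc1 : ∀ i, ‖c i‖ ≤ 1)
    (hcrec : ∀ i : ℕ, ψ (c (i + 1)) = c (i + 1) + c i) :
    ∃ u : B, HasSum (fun i : ℕ => c i * (a - 1) ^ i) u ∧ IsUnit u ∧ ψ u = a * u := by
  set t := a - 1 with ht
  have hone : ‖(1 : B)‖ ≤ 1 := hc0 ▸ hc1 0
  have hψt : ψ t = t := by simp [ht, map_sub, ha]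
  have htpow : ∀ i : ℕ, ‖t ^ i‖ ≤ ‖t‖ ^ i := by
    intro i
    induction i with
    | zero => simpa using hone
    | succ n ih =>
      calc ‖t ^ (n + 1)‖ = ‖t ^ n * t‖ := by rw [pow_succ]
        _ ≤ ‖t ^ n‖ * ‖t‖ := norm_mul_le _ _
        _ ≤ ‖t‖ ^ n * ‖t‖ := by
            exact mul_le_mul_of_nonneg_right ih (norm_nonneg t)
        _ = ‖t‖ ^ (n + 1) := (pow_succ _ _).symm
  have hterm : ∀ i : ℕ, ‖c i * t ^ i‖ ≤ ‖t‖ ^ i := by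
    intro i
    calc ‖c i * t ^ i‖ ≤ ‖c i‖ * ‖t ^ i‖ := norm_mul_le _ _
      _ ≤ 1 * (‖t‖ ^ i) := mul_le_mul (hc1 i) (htpow i) (norm_nonneg _) zero_le_one
      _ = ‖t‖ ^ i := one_mul _
  have hsum : Summable (fun i : ℕ => c i * t ^ i) :=
    Summable.of_norm_bounded (summable_geometric_of_lt_one (norm_nonneg t) ha1) hterm
  obtain ⟨u, hu⟩ := hsum
  refine ⟨u, hu, ?_, ?_⟩
  · -- u is a unit
    have hs : HasSum (fun n : ℕ => c (n + 1) * t ^ (n + 1)) (u - 1) := by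
      rw [hasSum_nat_add_iff (f := fun i : ℕ => c i * t ^ i) 1]
      simpa [hc0] using hu
    have hpartial : ∀ n : ℕ, ‖∑ i ∈ Finset.range n, c (i + 1) * t ^ (i + 1)‖ ≤ ‖t‖ := by
      intro n
      induction n with
      | zero => simp [norm_nonneg t]
      | succ m ih =>
        rw [Finset.sum_range_succ]
        refine le_trans (hna _ _) (max_le ih ?_)
        calc ‖c (m + 1) * t ^ (m + 1)‖ ≤ ‖t‖ ^ (m + 1) := hterm _
          _ ≤ ‖t‖ ^ 1 := pow_le_pow_of_le_one (norm_nonneg t) ha1.le (by omega)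
          _ = ‖t‖ := pow_one _
    have hnorm : ‖u - 1‖ ≤ ‖t‖ :=
      le_of_tendsto' (hs.tendsto_sum_nat.norm) hpartial |>.trans_eq rfl
    have h1u : ‖1 - u‖ < 1 := by
      rw [show (1 : B) - u = -(u - 1) by ring, norm_neg]
      exact lt_of_le_of_lt hnorm ha1
    have := (Units.oneSub (1 - u) h1u).isUnit
    simpa using this
  · -- ψ u = a * u
    have hmap : HasSum (fun i : ℕ => ψ (c i * t ^ i)) (ψ u) := hu.map ψ hψ
    have hdiff : HasSum (fun i : ℕ => ψ (c i * t ^ i) - c i * t ^ i) (ψ u - u) :=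
      hmap.sub hu
    have htu : HasSum (fun i : ℕ => c i * t ^ (i + 1)) (t * u) := by
      have := hu.mul_left t
      convert this using 2 with i
      · rfl
      ring
    have heq : (fun i : ℕ => ψ (c i * t ^ i) - c i * t ^ i) =
        fun i : ℕ => Nat.rec 0 (fun n _ => c n * t ^ (n + 1)) i := by
      funext i
      cases i with
      | zero => simp [hc0]
      | succ n => simp [map_mul, map_pow, hψt, hcrec n, add_mul]
    have htu' : HasSum (fun i : ℕ =>
        (Nat.rec 0 (fun n _ => c n * t ^ (n + 1)) i : B)) (t * u) := by
      rw [← hasSum_nat_add_iff' 1]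
      simpa using htu
    rw [heq] at hdiff
    have : ψ u - u = t * u := hdiff.unique htu'
    have : ψ u = u + t * u := by linear_combination this
    rw [this, ht]; ring
end

section
/- Let E be a field, f ≥ 1 an integer, A = (Fin f → E) the product ring of f copies of E, and σ : A ≃+* A the cyclic shift ring automorphism given by (σ x)(i) = x(i+1) (indices modulo f). Let M be a finitely generated A-module equipped with an additive bijection φ : M → M that is σ-semilinear, i.e. φ(a • m) = σ(a) • φ(m) for all a ∈ A and m ∈ M. Then M is a free A-module. -/
/-- Let `A = (Fin f → E)` (a product of `f` copies of a field `E`) with the cyclic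
shift automorphism `σ`. Any finitely generated `A`-module `M` equipped with an
additive bijection `φ : M → M` that is `σ`-semilinear is free as an `A`-module. -/
theorem free_of_semilinear_bijection
    {E : Type*} [Field E] (f : ℕ) [NeZero f] (hf : 1 ≤ f)
    (σ : (Fin f → E) ≃+* (Fin f → E))
    (hσ : ∀ (x : Fin f → E) (i : Fin f), σ x i = x (i + 1))
    (M : Type*) [AddCommGroup M] [Module (Fin f → E) M]
    [Module.Finite (Fin f → E) M]
    (φ : M ≃+ M)
    (hφ : ∀ (a : Fin f → E) (m : M), φ (a • m) = σ a • φ m) :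
    Module.Free (Fin f → E) M := by
  letI : Module E M := Module.compHom M (algebraMap E (Fin f → E))
  haveI : IsScalarTower E (Fin f → E) M := ⟨fun c a m => by
    show (c • a) • m = (algebraMap E (Fin f → E) c) • (a • m)
    rw [Algebra.smul_def, mul_smul]⟩
  haveI : Module.Finite E M := Module.Finite.trans (Fin f → E) M
  -- idempotents
  set e : Fin f → (Fin f → E) := fun i => Pi.single i 1 with he
  have hee : ∀ i, e i * e i = e i := by
    intro i; funext j; by_cases h : j = i <;> simp [he, Pi.single_apply, h]
  have heij : ∀ i j, i ≠ j → e i * e j = 0 := by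
    intro i j hij; funext k
    by_cases h : k = i <;> simp [he, Pi.single_apply, h, Ne.symm hij]
  have hsum : ∑ i, e i = 1 := by
    funext j; simp [he, Pi.single_apply, Finset.sum_ite_eq']
  have hea : ∀ (i : Fin f) (a : Fin f → E),
      e i * a = algebraMap E (Fin f → E) (a i) * e i := by
    intro i a; funext j
    by_cases h : j = i <;> simp [he, Pi.single_apply, h]
  -- σ facts
  have hσe : ∀ i, σ (e i) = e (i - 1) := by
    intro i; funext j
    rw [hσ]
    simp only [he, Pi.single_apply, eq_sub_iff_add_eq]
  have hσe' : ∀ i, σ.symm (e i) = e (i + 1) := by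
    intro i
    apply σ.injective
    rw [σ.apply_symm_apply, hσe, add_sub_cancel_right]
  have hσc : ∀ c : E, σ (algebraMap E (Fin f → E) c) = algebraMap E (Fin f → E) c := by
    intro c; funext j; rw [hσ]; simp
  -- φ.symm semilinearity and E-linearity
  have hφs : ∀ (a : Fin f → E) (m : M), φ.symm (a • m) = σ.symm a • φ.symm m := by
    intro a m
    apply φ.injective
    rw [φ.apply_symm_apply, hφ, σ.apply_symm_apply, φ.apply_symm_apply]
  have hφE : ∀ (c : E) (m : M), φ (c • m) = c • φ m := by
    intro c m
    rw [← algebraMap_smul (Fin f → E) c m, hφ, hσc, algebraMap_smul]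
  -- Φ as an E-linear equiv
  set Φ : M ≃ₗ[E] M :=
    { φ with map_smul' := hφE } with hΦ
  have hΦapp : ∀ m, Φ m = φ m := fun _ => rfl
  have hΦsapp : ∀ m, Φ.symm m = φ.symm m := fun _ => rfl
  -- powers
  have hpow : ∀ (ψ : M ≃ₗ[E] M) (n : ℕ) (x : M), (ψ ^ (n + 1)) x = (ψ ^ n) (ψ x) := by
    intro ψ n x; rw [pow_succ]; rfl
  have hinv : Φ.symm = Φ⁻¹ := rfl
  have hcancel : ∀ (n : ℕ) (x : M), (Φ ^ n) ((Φ.symm ^ n) x) = x := by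
    intro n x
    show (Φ ^ n * Φ.symm ^ n) x = x
    rw [hinv, inv_pow, mul_inv_cancel]
    rfl
  have hcancel' : ∀ (n : ℕ) (x : M), (Φ.symm ^ n) ((Φ ^ n) x) = x := by
    intro n x
    show (Φ.symm ^ n * Φ ^ n) x = x
    rw [hinv, inv_pow, inv_mul_cancel]
    rfl
  have hpow' : ∀ (ψ : M ≃ₗ[E] M) (n : ℕ) (x : M), (ψ ^ (n + 1)) x = ψ ((ψ ^ n) x) := by
    intro ψ n x; rw [pow_succ']; rfl
  -- single-step shift lemmas
  have stepS : ∀ (i : Fin f) (x : M), Φ.symm (e i • x) = e (i + 1) • Φ.symm x := by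
    intro i x
    rw [hΦsapp, hΦsapp, hφs, hσe']
  have stepF : ∀ (i : Fin f) (x : M), Φ (e i • x) = e (i - 1) • Φ x := by
    intro i x
    rw [hΦapp, hΦapp, hφ, hσe]
  letI : AddMonoidWithOne (Fin f) := Fin.instAddMonoidWithOne f
  have claim1 : ∀ (n : ℕ) (x : M),
      (Φ.symm ^ n) (e 0 • x) = e ((n : Fin f)) • (Φ.symm ^ n) x := by
    intro n
    induction n with
    | zero => intro x; simp
    | succ n ih =>
      intro x
      rw [hpow', ih, stepS, hpow', Nat.cast_add_one]
  have claim2 : ∀ (n : ℕ) (x : M),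
      (Φ ^ n) (e ((n : Fin f)) • x) = e 0 • (Φ ^ n) x := by
    intro n
    induction n with
    | zero => intro x; simp
    | succ n ih =>
      intro x
      rw [hpow, Nat.cast_add_one, stepF, add_sub_cancel_right, ih, hpow]
  -- the E-subspace e 0 • M
  set L0 : M →ₗ[E] M :=
    { toFun := fun m => e 0 • m
      map_add' := fun x y => smul_add _ x y
      map_smul' := fun c x => smul_comm _ c x } with hL0
  set p : Submodule E M := LinearMap.range L0 with hp
  have hp0 : ∀ x ∈ p, e 0 • x = x := by
    rintro x ⟨y, rfl⟩
    show e 0 • (e 0 • y) = e 0 • y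
    rw [smul_smul, hee]
  set ι := Module.Free.ChooseBasisIndex E p with hι
  set b : Module.Basis ι E p := Module.Free.chooseBasis E p with hb
  set v : ι → M := fun k => ∑ i : Fin f, (Φ.symm ^ (i : Fin f).val) ((b k : M)) with hvdef
  have hb0 : ∀ k, e 0 • ((b k : M)) = (b k : M) := fun k => hp0 _ (b k).2
  have hGmem : ∀ (j : Fin f) (k : ι),
      e j • (Φ.symm ^ j.val) ((b k : M)) = (Φ.symm ^ j.val) ((b k : M)) := by
    intro j k
    conv_rhs => rw [← hb0 k]
    rw [claim1, Fin.cast_val_eq_self]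
  have hv : ∀ (k : ι) (i : Fin f), e i • v k = (Φ.symm ^ i.val) ((b k : M)) := by
    intro k i
    rw [hvdef]
    simp only
    rw [Finset.smul_sum]
    rw [Finset.sum_eq_single i]
    · exact hGmem i k
    · intro j _ hji
      rw [← hGmem j k, smul_smul, heij i j (Ne.symm hji), zero_smul]
    · intro h; exact absurd (Finset.mem_univ i) h
  -- linear independence
  have hli : LinearIndependent (Fin f → E) v := by
    rw [Fintype.linearIndependent_iff]
    intro g hg k
    funext i
    have h1 : ∑ l, (g l i : E) • (Φ.symm ^ i.val) ((b l : M)) = 0 := by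
      have h2 : e i • (∑ l, g l • v l) = 0 := by rw [hg, smul_zero]
      rw [Finset.smul_sum] at h2
      calc ∑ l, (g l i : E) • (Φ.symm ^ i.val) ((b l : M))
          = ∑ l, e i • g l • v l := by
            refine Finset.sum_congr rfl fun l _ => ?_
            rw [smul_smul, hea, mul_smul, algebraMap_smul, hv]
        _ = 0 := h2
    have h3 : ∑ l, (g l i : E) • (b l : M) = 0 := by
      have := congrArg (Φ ^ i.val) h1
      rw [map_sum, map_zero] at this
      simpa only [map_smul, hcancel] using this
    have h4 : (∑ l, (g l i : E) • b l : p) = 0 := by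
      apply Subtype.coe_injective
      push_cast
      simpa using h3
    exact Fintype.linearIndependent_iff.mp b.linearIndependent _ h4 k
  -- spanning
  have hsp : ⊤ ≤ Submodule.span (Fin f → E) (Set.range v) := by
    intro m _
    have hm : m = ∑ i, e i • m := by
      rw [← Finset.sum_smul, hsum, one_smul]
    rw [hm]
    apply Submodule.sum_mem
    intro i _
    set x : M := (Φ ^ i.val) (e i • m) with hx
    have hx0 : e 0 • x = x := by
      rw [hx]
      conv_rhs => rw [show e i • m = e ((i.val : Fin f)) • (e i • m) by
        rw [Fin.cast_val_eq_self, smul_smul, hee]]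
      rw [claim2]
    have hxp : x ∈ p := ⟨x, hx0⟩
    have hxsum : ∑ k, (b.repr ⟨x, hxp⟩ k : E) • (b k : M) = x := by
      have h5 := b.sum_repr ⟨x, hxp⟩
      have h6 := congrArg (Subtype.val) h5
      push_cast at h6
      simpa using h6
    have hmx : e i • m = (Φ.symm ^ i.val) x := by rw [hx, hcancel']
    rw [hmx, ← hxsum, map_sum]
    apply Submodule.sum_mem
    intro k _
    rw [map_smul, ← hv k i, ← smul_assoc]
    exact Submodule.smul_mem _ _ (Submodule.subset_span ⟨k, rfl⟩)
  exact Module.Free.of_basis (Module.Basis.mk hli hsp)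
end

section
/- Let (D, φ, N) be an E-(φ,N)-module over A equipped with a refinement 𝓕 of length n. Let i ∈ {1,…,n} be such that N(𝓕ᵢ₋₁) is strictly contained in N(𝓕ᵢ), and let j be the least index in {1,…,n} such that N(𝓕ᵢ) ⊆ N(𝓕ᵢ₋₁) + 𝓕ⱼ. Then N(𝓕ᵢ₋₁) ∩ 𝓕ⱼ = N(𝓕ᵢ₋₁) ∩ 𝓕ⱼ₋₁. -/
/-- Let `(D, φ, N)` be an `E`-`(φ,N)`-module over `A = (Fin f → E)` (with `σ` the
cyclic shift automorphism of `A`) equipped with a refinement `𝓕` of length `n`.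
If `i ∈ {1,…,n}` satisfies `N(𝓕ᵢ₋₁) ⊊ N(𝓕ᵢ)` and `j` is the least index in
`{1,…,n}` with `N(𝓕ᵢ) ⊆ N(𝓕ᵢ₋₁) + 𝓕ⱼ`, then
`N(𝓕ᵢ₋₁) ∩ 𝓕ⱼ = N(𝓕ᵢ₋₁) ∩ 𝓕ⱼ₋₁`. -/
theorem refinement_monodromy_inf_eq
    {E : Type*} [Field E] [CharZero E] (p : ℕ) (hp : p.Prime)
    (f : ℕ) [NeZero f] (hf : 1 ≤ f)
    (σ : (Fin f → E) ≃+* (Fin f → E))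
    (hσ : ∀ (x : Fin f → E) (i : Fin f), σ x i = x (i + 1))
    (D : Type*) [AddCommGroup D] [Module (Fin f → E) D]
    [Module.Finite (Fin f → E) D] [Module.Free (Fin f → E) D]
    (φ : D ≃+ D)
    (hφ : ∀ (a : Fin f → E) (x : D), φ (a • x) = σ a • φ x)
    (N : D →ₗ[Fin f → E] D)
    (hNφ : ∀ x : D, N (φ x) = p • φ (N x))
    (n : ℕ) (𝓕 : ℕ → Submodule (Fin f → E) D)
    (h𝓕0 : 𝓕 0 = ⊥) (h𝓕n : 𝓕 n = ⊤)
    (hmono : ∀ k, k < n → 𝓕 k ≤ 𝓕 (k + 1))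
    (hφstab : ∀ k, k ≤ n → ∀ x ∈ 𝓕 k, φ x ∈ 𝓕 k)
    (hNstab : ∀ k, k ≤ n → ∀ x ∈ 𝓕 k, N x ∈ 𝓕 k)
    (hrank1 : ∀ k, 1 ≤ k → k ≤ n →
      Nonempty ((𝓕 k ⧸ (𝓕 (k - 1)).comap (𝓕 k).subtype) ≃ₗ[Fin f → E] (Fin f → E)))
    (i : ℕ) (hi1 : 1 ≤ i) (hin : i ≤ n)
    (hlt : Submodule.map N (𝓕 (i - 1)) < Submodule.map N (𝓕 i))
    (j : ℕ) (hj1 : 1 ≤ j) (hjn : j ≤ n)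
    (hjle : Submodule.map N (𝓕 i) ≤ Submodule.map N (𝓕 (i - 1)) ⊔ 𝓕 j)
    (hjmin : ∀ j', 1 ≤ j' → j' ≤ n →
      Submodule.map N (𝓕 i) ≤ Submodule.map N (𝓕 (i - 1)) ⊔ 𝓕 j' → j ≤ j') :
    Submodule.map N (𝓕 (i - 1)) ⊓ 𝓕 j = Submodule.map N (𝓕 (i - 1)) ⊓ 𝓕 (j - 1) := by
  classical
  -- E-module structure on D via the diagonal embedding
  letI : Module E D := Module.compHom D (algebraMap E (Fin f → E))
  haveI hTower : IsScalarTower E (Fin f → E) D := by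
    constructor
    intro c a x
    show (c • a) • x = algebraMap E (Fin f → E) c • (a • x)
    have h1 : (c • a) = algebraMap E (Fin f → E) c * a := by
      funext k
      simp [Algebra.smul_def]
    rw [h1, mul_smul]
  haveI : Module.Finite E D := Module.Finite.trans (Fin f → E) D
  -- φ as an E-linear map
  have hσconst : ∀ c : E, σ (algebraMap E (Fin f → E) c) = algebraMap E (Fin f → E) c := by
    intro c
    funext k
    rw [hσ]
    simp
  let φE : D →ₗ[E] D :=
    { toFun := φ
      map_add' := φ.map_add
      map_smul' := by
        intro c x
        show φ ((algebraMap E (Fin f → E) c) • x) = (algebraMap E (Fin f → E) c) • φ x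
        rw [hφ, hσconst] }
  -- saturation of the 𝓕 k under φ
  have hsat : ∀ k, k ≤ n → ∀ x : D, φ x ∈ 𝓕 k → x ∈ 𝓕 k := by
    intro k hk x hx
    set V : Submodule E D := (𝓕 k).restrictScalars E with hV
    have hstab : ∀ y ∈ V, φE y ∈ V := fun y hy => hφstab k hk y hy
    have hinj : Function.Injective (φE.restrict hstab) := by
      intro a b hab
      have : φ (a : D) = φ (b : D) := congrArg Subtype.val hab
      exact Subtype.ext (φ.injective this)
    have hsurj : Function.Surjective (φE.restrict hstab) :=
      LinearMap.injective_iff_surjective.mp hinj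
    obtain ⟨⟨y, hy⟩, h⟩ := hsurj ⟨φ x, hx⟩
    have : φ y = φ x := congrArg Subtype.val h
    have := φ.injective this
    rwa [← this]
  -- M := N(𝓕 (i-1)) is φ-stable
  set M := Submodule.map N (𝓕 (i - 1)) with hM
  have hMφ : ∀ m ∈ M, φ m ∈ M := by
    rintro _ ⟨y, hy, rfl⟩
    have hφy : φ y ∈ 𝓕 (i - 1) := hφstab (i - 1) (by omega) y hy
    have hNm : N (φ y) ∈ M := ⟨φ y, hφy, rfl⟩
    have hpv : ((p : ℕ) : Fin f → E) • φ (N y) = N (φ y) := by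
      rw [Nat.cast_smul_eq_nsmul]; exact (hNφ y).symm
    have hpE : (p : E) ≠ 0 := Nat.cast_ne_zero.mpr hp.ne_zero
    have hcalc : φ (N y) = ((fun _ => ((p : E))⁻¹ : Fin f → E)) • N (φ y) := by
      rw [← hpv, ← mul_smul]
      have : ((fun _ => ((p : E))⁻¹ : Fin f → E)) * ((p : ℕ) : Fin f → E) = 1 := by
        funext k
        show (p : E)⁻¹ * ((p : ℕ) : E) = 1
        rw [inv_mul_cancel₀ hpE]
      rw [this, one_smul]
    rw [hcalc]
    exact Submodule.smul_mem _ _ hNm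
  -- idempotents
  set e : Fin f → (Fin f → E) := fun τ => Pi.single τ 1 with he
  have hσe : ∀ τ, σ (e τ) = e (τ - 1) := by
    intro τ
    funext k
    rw [hσ]
    simp only [he, Pi.single_apply]
    by_cases h : k + 1 = τ
    · rw [if_pos h, if_pos (eq_sub_iff_add_eq.mpr h)]
    · rw [if_neg h, if_neg (fun hc => h (eq_sub_iff_add_eq.mp hc))]
  have hee : ∀ τ, e τ * e τ = e τ := by
    intro τ
    funext k
    simp only [he, Pi.mul_apply, Pi.single_apply]
    split <;> simp
  have hsum1 : (∑ τ : Fin f, e τ) = 1 := by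
    have := Finset.univ_sum_single (1 : Fin f → E)
    simpa [he] using this
  -- the support set
  set S : Set (Fin f) := {τ | ∃ x, x ∈ M ⊓ 𝓕 j ∧ e τ • x ∉ 𝓕 (j - 1)} with hS
  have hshift : ∀ τ, τ ∈ S → τ - 1 ∈ S := by
    rintro τ ⟨x, ⟨hxM, hxj⟩, hxn⟩
    refine ⟨φ x, ⟨hMφ x hxM, hφstab j hjn x hxj⟩, ?_⟩
    have hkey : e (τ - 1) • φ x = φ (e τ • x) := by
      rw [hφ, hσe]
    rw [hkey]
    intro hcon
    exact hxn (hsat (j - 1) (by omega) _ hcon)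
  have hmono' : 𝓕 (j - 1) ≤ 𝓕 j := by
    have := hmono (j - 1) (by omega)
    rwa [Nat.sub_add_cancel hj1] at this
  by_cases hSne : S = ∅
  · -- S empty: the desired equality
    apply le_antisymm
    · rintro x ⟨hxM, hxj⟩
      refine ⟨hxM, ?_⟩
      have hall : ∀ τ : Fin f, e τ • x ∈ 𝓕 (j - 1) := by
        intro τ
        by_contra hcon
        exact (Set.eq_empty_iff_forall_notMem.mp hSne τ) ⟨x, ⟨hxM, hxj⟩, hcon⟩
      have : x = ∑ τ : Fin f, e τ • x := by
        rw [← Finset.sum_smul, hsum1, one_smul]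
      rw [this]
      exact Submodule.sum_mem _ fun τ _ => hall τ
    · exact inf_le_inf_left _ hmono'
  · -- S nonempty: then S = univ, derive a contradiction
    exfalso
    obtain ⟨τ₀, hτ₀⟩ := Set.nonempty_iff_ne_empty.mpr hSne
    open Fin.NatCast in
    have hall : ∀ τ : Fin f, τ ∈ S := by
      have hiter : ∀ k : ℕ, τ₀ - (k : Fin f) ∈ S := by
        intro k
        induction k with
        | zero => simpa using hτ₀
        | succ m ih =>
          have : ((m + 1 : ℕ) : Fin f) = (m : Fin f) + 1 := by push_cast; ring
          rw [this, ← sub_sub]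
          exact hshift _ ih
      intro τ
      have := hiter ((τ₀ - τ).val)
      rwa [Fin.cast_val_eq_self, sub_sub_cancel] at this
    -- choose witnesses
    choose x hx using hall
    -- the rank-one quotient
    obtain ⟨ι⟩ := hrank1 j hj1 hjn
    set K := (𝓕 (j - 1)).comap (𝓕 j).subtype with hK
    set π : (𝓕 j) →ₗ[Fin f → E] (Fin f → E) := ι.toLinearMap.comp K.mkQ with hπ
    have hπ0 : ∀ y : (𝓕 j), π y = 0 ↔ (y : D) ∈ 𝓕 (j - 1) := by
      intro y
      rw [hπ]
      simp only [LinearMap.comp_apply, LinearEquiv.coe_coe, Submodule.mkQ_apply]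
      rw [LinearEquiv.map_eq_zero_iff, Submodule.Quotient.mk_eq_zero]
      rfl
    -- elements w τ = e τ • x τ
    set w : Fin f → D := fun τ => e τ • x τ with hw
    have hwM : ∀ τ, w τ ∈ M := fun τ => Submodule.smul_mem _ _ (hx τ).1.1
    have hwj : ∀ τ, w τ ∈ 𝓕 j := fun τ => Submodule.smul_mem _ _ (hx τ).1.2
    set wj : Fin f → (𝓕 j) := fun τ => ⟨w τ, hwj τ⟩ with hwjdef
    set a : Fin f → (Fin f → E) := fun τ => π (wj τ) with ha
    have ha0 : ∀ τ, a τ ≠ 0 := by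
      intro τ hcon
      exact (hx τ).2 ((hπ0 (wj τ)).mp hcon)
    have hae : ∀ τ, e τ • a τ = a τ := by
      intro τ
      have h1 : e τ • wj τ = wj τ := by
        apply Subtype.ext
        show e τ • w τ = w τ
        rw [hw]
        show e τ • (e τ • x τ) = e τ • x τ
        rw [← mul_smul, hee]
      calc e τ • a τ = π (e τ • wj τ) := (map_smul π (e τ) (wj τ)).symm
        _ = a τ := by rw [h1]
    have haτ : ∀ τ, a τ τ ≠ 0 := by
      intro τ hcon
      apply ha0 τ
      funext k
      show a τ k = 0
      by_cases hk : k = τ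
      · rw [hk]; exact hcon
      · have h2 := congrFun (hae τ) k
        rw [smul_eq_mul, Pi.mul_apply] at h2
        rw [← h2, he]
        simp [Pi.single_apply, hk]
    -- 𝓕 j ≤ M ⊔ 𝓕 (j-1)
    have hsub : 𝓕 j ≤ M ⊔ 𝓕 (j - 1) := by
      intro y hy
      set b : Fin f → E := π ⟨y, hy⟩ with hb
      set zj : (𝓕 j) := ∑ τ : Fin f, (Pi.single τ (b τ * (a τ τ)⁻¹) : Fin f → E) • wj τ with hzj
      have hzM : (zj : D) ∈ M := by
        rw [hzj]
        rw [Submodule.coe_sum]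
        apply Submodule.sum_mem
        intro τ _
        show ((Pi.single τ (b τ * (a τ τ)⁻¹) : Fin f → E) • wj τ : D) ∈ M
        exact Submodule.smul_mem _ _ (hwM τ)
      have hπz : π zj = b := by
        rw [hzj, map_sum]
        have hterm : ∀ τ : Fin f, π ((Pi.single τ (b τ * (a τ τ)⁻¹) : Fin f → E) • wj τ)
            = Pi.single τ (b τ) := by
          intro τ
          rw [map_smul]
          funext k
          simp only [smul_eq_mul, Pi.mul_apply]
          have hrw : π (wj τ) = a τ := rfl
          rw [hrw]
          by_cases hk : k = τ
          · subst hk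
            rw [Pi.single_eq_same, Pi.single_eq_same, mul_assoc, inv_mul_cancel₀ (haτ k), mul_one]
          · rw [Pi.single_eq_of_ne hk, Pi.single_eq_of_ne hk, zero_mul]
        rw [Finset.sum_congr rfl (fun τ _ => hterm τ)]
        exact Finset.univ_sum_single b
      have hd : ((⟨y, hy⟩ - zj : (𝓕 j)) : D) ∈ 𝓕 (j - 1) := by
        apply (hπ0 _).mp
        rw [map_sub, hπz, hb, sub_self]
      rw [Submodule.mem_sup]
      refine ⟨(zj : D), hzM, y - (zj : D), hd, by abel⟩
    -- conclude contradiction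
    have h2 : Submodule.map N (𝓕 i) ≤ M ⊔ 𝓕 (j - 1) := by
      refine hjle.trans ?_
      exact sup_le le_sup_left hsub
    rcases Nat.lt_or_ge j 2 with hj2 | hj2
    · have hj1' : j = 1 := by omega
      rw [hj1'] at h2
      simp only [Nat.sub_self, h𝓕0, sup_bot_eq] at h2
      exact hlt.not_ge h2
    · have := hjmin (j - 1) (by omega) (by omega) h2
      omega
end

section
/- Let (D, φ, N) be an E-(φ,N)-module over A equipped with a refinement 𝓕 of length n. Let i ∈ {1,…,n} be such that N(𝓕ᵢ₋₁) is strictly contained in N(𝓕ᵢ), and let j be the least index in {1,…,n} such that N(𝓕ᵢ) ⊆ N(𝓕ᵢ₋₁) + 𝓕ⱼ. Then: (1) the A-linear map 𝓕ⱼ/𝓕ⱼ₋₁ → (N(𝓕ᵢ₋₁) + 𝓕ⱼ)/(N(𝓕ᵢ₋₁) + 𝓕ⱼ₋₁) induced by the inclusion 𝓕ⱼ ⊆ N(𝓕ᵢ₋₁) + 𝓕ⱼ is an isomorphism; and (2) the A-linear map 𝓕ᵢ/𝓕ᵢ₋₁ → (N(𝓕ᵢ₋₁) + 𝓕ⱼ)/(N(𝓕ᵢ₋₁)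 + 𝓕ⱼ₋₁) induced by N is also an isomorphism. Consequently, the induced monodromy map N_𝓕 : 𝓕ᵢ/𝓕ᵢ₋₁ → 𝓕ⱼ/𝓕ⱼ₋₁ (the composite of (2) with the inverse of (1)) is an isomorphism of A-modules. -/
section QuotMaps

variable {A : Type*} [CommRing A] {D : Type*} [AddCommGroup D] [Module A D]

/-- The `A`-linear map `R/Q → (P ⊔ R)/(P ⊔ Q)` induced by the inclusion
`R ≤ P ⊔ R`, where quotients of one submodule by another are realized as
`R ⧸ Q.comap R.subtype`. -/
noncomputable def inclQuotMap (P Q R : Submodule A D) :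
    (R ⧸ Q.comap R.subtype) →ₗ[A]
      (↥(P ⊔ R) ⧸ (P ⊔ Q).comap (P ⊔ R).subtype) :=
  Submodule.liftQ _
    (((P ⊔ Q).comap (P ⊔ R).subtype).mkQ ∘ₗ
      Submodule.inclusion (le_sup_right : R ≤ P ⊔ R))
    (by
      intro x hx
      simp only [Submodule.mem_comap] at hx
      simp only [LinearMap.mem_ker, LinearMap.comp_apply, Submodule.mkQ_apply,
        Submodule.Quotient.mk_eq_zero, Submodule.mem_comap, Submodule.subtype_apply,
        Submodule.coe_inclusion]
      exact Submodule.mem_sup_right hx)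

/-- The `A`-linear map `Fi/Fim → (N(Fim) ⊔ FJ)/(N(Fim) ⊔ FJm)` induced by `N`,
given that `N(Fi) ≤ N(Fim) ⊔ FJ` and `N(Fim) ≤ N(Fim) ⊔ FJm`. -/
noncomputable def nQuotMap (N : D →ₗ[A] D) (Fi Fim FJ FJm : Submodule A D)
    (hle : Submodule.map N Fi ≤ Submodule.map N Fim ⊔ FJ) :
    (Fi ⧸ Fim.comap Fi.subtype) →ₗ[A]
      (↥(Submodule.map N Fim ⊔ FJ) ⧸
        (Submodule.map N Fim ⊔ FJm).comap (Submodule.map N Fim ⊔ FJ).subtype) :=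
  Submodule.liftQ _
    (((Submodule.map N Fim ⊔ FJm).comap (Submodule.map N Fim ⊔ FJ).subtype).mkQ ∘ₗ
      LinearMap.codRestrict (Submodule.map N Fim ⊔ FJ) (N ∘ₗ Fi.subtype)
        (fun x => hle (Submodule.mem_map_of_mem x.2)))
    (by
      intro x hx
      simp only [Submodule.mem_comap] at hx
      simp only [LinearMap.mem_ker, LinearMap.comp_apply, Submodule.mkQ_apply,
        Submodule.Quotient.mk_eq_zero, Submodule.mem_comap, Submodule.subtype_apply,
        LinearMap.codRestrict_apply]
      exact Submodule.mem_sup_left (Submodule.mem_map_of_mem hx))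

end QuotMaps

open Submodule Fin.NatCast Fin.CommRing in
theorem shift_ideal' {E : Type*} [Field E] {f : ℕ} [NeZero f]
    (σ : (Fin f → E) ≃+* (Fin f → E)) (hσ : ∀ (x : Fin f → E) (i : Fin f), σ x i = x (i + 1))
    (I : Submodule (Fin f → E) (Fin f → E)) (hstab : ∀ x ∈ I, σ x ∈ I) :
    I = ⊥ ∨ I = ⊤ := by
  by_cases hb : I = ⊥
  · exact Or.inl hb
  right
  obtain ⟨x, hxI, hx0⟩ : ∃ x ∈ I, x ≠ 0 := by
    by_contra h
    push_neg at h
    exact hb (le_bot_iff.mp fun y hy => h y hy)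
  obtain ⟨k, hk⟩ : ∃ k, x k ≠ 0 := by
    by_contra h; push_neg at h; exact hx0 (funext h)
  have hsingle : (Pi.single k (1:E) : Fin f → E) ∈ I := by
    have : (Pi.single k (x k)⁻¹ : Fin f → E) • x ∈ I := I.smul_mem _ hxI
    convert this using 1
    funext m
    by_cases hm : m = k
    · subst hm; simp [Pi.single_eq_same, inv_mul_cancel₀ hk, Pi.smul_apply']
    · simp [Pi.single_eq_of_ne hm, Pi.smul_apply']
  have hσsingle : ∀ m : Fin f, σ (Pi.single m (1:E)) = Pi.single (m - 1) (1:E) := by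
    intro m
    funext i
    rw [hσ]
    by_cases hi : i = m - 1
    · subst hi
      have h1 : m - 1 + 1 = m := by ring
      rw [h1, Pi.single_eq_same, Pi.single_eq_same]
    · rw [Pi.single_eq_of_ne hi, Pi.single_eq_of_ne]
      intro h; exact hi (by rw [← h]; ring)
  have hall : ∀ t : ℕ, (Pi.single (k - (t : Fin f)) (1:E) : Fin f → E) ∈ I := by
    intro t
    induction t with
    | zero => simpa using hsingle
    | succ t ih =>
        have h2 := hstab _ ih
        rw [hσsingle] at h2
        have h3 : ((t + 1 : ℕ) : Fin f) = (t : Fin f) + 1 := by push_cast; ring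
        rw [h3, ← sub_sub]
        exact h2
  have hall' : ∀ m : Fin f, (Pi.single m (1:E) : Fin f → E) ∈ I := by
    intro m
    have := hall ((k - m : Fin f) : ℕ)
    rwa [Fin.cast_val_eq_self, sub_sub_cancel] at this
  rw [eq_top_iff]
  intro y _
  have hy : y = ∑ m : Fin f, (Pi.single m (y m) : Fin f → E) • (Pi.single m (1:E) : Fin f → E) := by
    rw [← Finset.univ_sum_single y]
    congr 1
    funext m
    funext i
    by_cases hi : i = m
    · subst hi; simp [Pi.smul_apply']
    · simp [Pi.single_eq_of_ne hi, Pi.smul_apply']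
  rw [hy]
  exact Submodule.sum_mem I fun m _ => I.smul_mem _ (hall' m)


theorem master' {E : Type*} [Field E] {f : ℕ} [NeZero f]
    (σ : (Fin f → E) ≃+* (Fin f → E)) (hσ : ∀ (x : Fin f → E) (i : Fin f), σ x i = x (i + 1))
    {M : Type*} [AddCommGroup M] [Module (Fin f → E) M]
    (ψ : M → M) (hψsurj : Function.Surjective ψ)
    (hψsem : ∀ (a : Fin f → E) (m : M), ψ (a • m) = σ a • ψ m)
    (g : (Fin f → E) →ₗ[Fin f → E] M) (hg : Function.Surjective g) :
    (∀ m : M, m = 0) ∨ Function.Bijective g := by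
  have hker : ∀ x : Fin f → E, x ∈ LinearMap.ker g ↔ ∀ m : M, x • m = 0 := by
    intro x
    constructor
    · intro hx m
      obtain ⟨a, rfl⟩ := hg m
      have heq : x • g a = g (a • x) := by
        rw [← map_smul, smul_eq_mul, smul_eq_mul, mul_comm]
      rw [heq]
      have : a • x ∈ LinearMap.ker g := (LinearMap.ker g).smul_mem a hx
      exact this
    · intro h
      have := h (g 1)
      rw [← map_smul, smul_eq_mul, mul_one] at this
      exact this
  have hψ0 : ψ 0 = 0 := by
    have := hψsem 0 0
    rw [zero_smul, map_zero, zero_smul] at this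
    rw [this]
  have hstab : ∀ x ∈ LinearMap.ker g, σ x ∈ LinearMap.ker g := by
    intro x hx
    rw [hker] at hx ⊢
    intro m
    obtain ⟨m', rfl⟩ := hψsurj m
    rw [← hψsem, hx, hψ0]
  rcases shift_ideal' σ hσ _ hstab with h | h
  · right
    refine ⟨?_, hg⟩
    rw [← LinearMap.ker_eq_bot, h]
  · left
    intro m
    obtain ⟨a, rfl⟩ := hg m
    have h1 : (1 : Fin f → E) ∈ LinearMap.ker g := h ▸ Submodule.mem_top
    rw [hker] at h1
    have := h1 (g a)
    rwa [one_smul] at this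


theorem stab_surj' {E : Type*} [Field E] {f : ℕ} [NeZero f]
    {D : Type*} [AddCommGroup D] [Module (Fin f → E) D] [Module.Finite (Fin f → E) D]
    (φ : D ≃+ D)
    (hφE : ∀ (e : E) (x : D), φ (((fun _ => e) : Fin f → E) • x) = ((fun _ => e) : Fin f → E) • φ x)
    (S : Submodule (Fin f → E) D) (hS : ∀ x ∈ S, φ x ∈ S) :
    ∀ y ∈ S, ∃ x ∈ S, φ x = y := by
  letI : Module E D := Module.compHom D (algebraMap E (Fin f → E))
  haveI : IsScalarTower E (Fin f → E) D := by
    constructor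
    intro e a d
    show (e • a) • d = (algebraMap E (Fin f → E) e) • (a • d)
    rw [← mul_smul]
    congr 1
  haveI : Module.Finite E D := Module.Finite.trans (Fin f → E) D
  let φE : D →ₗ[E] D :=
    { toFun := φ
      map_add' := map_add φ
      map_smul' := by
        intro e x
        show φ ((algebraMap E (Fin f → E) e) • x) = (algebraMap E (Fin f → E) e) • φ x
        have : algebraMap E (Fin f → E) e = fun _ => e := rfl
        rw [this]
        exact hφE e x }
  have hinj : Function.Injective φE := φ.injective
  let SE := S.restrictScalars E
  have hle : Submodule.map φE SE ≤ SE := by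
    rintro _ ⟨x, hx, rfl⟩
    exact hS x hx
  have hrank : Module.finrank E SE ≤ Module.finrank E (Submodule.map φE SE) := by
    rw [(Submodule.equivMapOfInjective φE hinj SE).finrank_eq]
  have heq : Submodule.map φE SE = SE := Submodule.eq_of_le_of_finrank_le hle hrank
  intro y hy
  have : y ∈ Submodule.map φE SE := heq.symm ▸ hy
  obtain ⟨x, hx, rfl⟩ := this
  exact ⟨x, hx, rfl⟩


set_option maxHeartbeats 2000000 in
/-- Let `(D, φ, N)` be an `E`-`(φ,N)`-module over `A = (Fin f → E)` (with `σ` the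
cyclic shift automorphism of `A`) equipped with a refinement `𝓕` of length `n`.
Let `i ∈ {1,…,n}` be such that `N(𝓕ᵢ₋₁) ⊊ N(𝓕ᵢ)`, and `j` the least index in
`{1,…,n}` with `N(𝓕ᵢ) ⊆ N(𝓕ᵢ₋₁) + 𝓕ⱼ`. Then: (1) the map
`𝓕ⱼ/𝓕ⱼ₋₁ → (N(𝓕ᵢ₋₁) + 𝓕ⱼ)/(N(𝓕ᵢ₋₁) + 𝓕ⱼ₋₁)` induced by the inclusion is an
isomorphism; (2) the map `𝓕ᵢ/𝓕ᵢ₋₁ → (N(𝓕ᵢ₋₁) + 𝓕ⱼ)/(N(𝓕ᵢ₋₁) + 𝓕ⱼ₋₁)` induced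
by `N` is an isomorphism; consequently, the induced monodromy
`N_𝓕 : 𝓕ᵢ/𝓕ᵢ₋₁ → 𝓕ⱼ/𝓕ⱼ₋₁` (the composite of (2) with the inverse of (1)) is an
isomorphism of `A`-modules. -/
theorem refinement_monodromy_graded_iso
    {E : Type*} [Field E] [CharZero E] (p : ℕ) (hp : p.Prime)
    (f : ℕ) [NeZero f] (hf : 1 ≤ f)
    (σ : (Fin f → E) ≃+* (Fin f → E))
    (hσ : ∀ (x : Fin f → E) (i : Fin f), σ x i = x (i + 1))
    (D : Type*) [AddCommGroup D] [Module (Fin f → E) D]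
    [Module.Finite (Fin f → E) D] [Module.Free (Fin f → E) D]
    (φ : D ≃+ D)
    (hφ : ∀ (a : Fin f → E) (x : D), φ (a • x) = σ a • φ x)
    (N : D →ₗ[Fin f → E] D)
    (hNφ : ∀ x : D, N (φ x) = p • φ (N x))
    (n : ℕ) (𝓕 : ℕ → Submodule (Fin f → E) D)
    (h𝓕0 : 𝓕 0 = ⊥) (h𝓕n : 𝓕 n = ⊤)
    (hmono : ∀ k, k < n → 𝓕 k ≤ 𝓕 (k + 1))
    (hφstab : ∀ k, k ≤ n → ∀ x ∈ 𝓕 k, φ x ∈ 𝓕 k)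
    (hNstab : ∀ k, k ≤ n → ∀ x ∈ 𝓕 k, N x ∈ 𝓕 k)
    (hrank1 : ∀ k, 1 ≤ k → k ≤ n →
      Nonempty ((𝓕 k ⧸ (𝓕 (k - 1)).comap (𝓕 k).subtype) ≃ₗ[Fin f → E] (Fin f → E)))
    (i : ℕ) (hi1 : 1 ≤ i) (hin : i ≤ n)
    (hlt : Submodule.map N (𝓕 (i - 1)) < Submodule.map N (𝓕 i))
    (j : ℕ) (hj1 : 1 ≤ j) (hjn : j ≤ n)
    (hjle : Submodule.map N (𝓕 i) ≤ Submodule.map N (𝓕 (i - 1)) ⊔ 𝓕 j)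
    (hjmin : ∀ j', 1 ≤ j' → j' ≤ n →
      Submodule.map N (𝓕 i) ≤ Submodule.map N (𝓕 (i - 1)) ⊔ 𝓕 j' → j ≤ j') :
    Function.Bijective (inclQuotMap (Submodule.map N (𝓕 (i - 1))) (𝓕 (j - 1)) (𝓕 j)) ∧
    Function.Bijective (nQuotMap N (𝓕 i) (𝓕 (i - 1)) (𝓕 j) (𝓕 (j - 1)) hjle) ∧
    ∃ g : (𝓕 i ⧸ (𝓕 (i - 1)).comap (𝓕 i).subtype) ≃ₗ[Fin f → E]
        (𝓕 j ⧸ (𝓕 (j - 1)).comap (𝓕 j).subtype),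
      ∀ x, inclQuotMap (Submodule.map N (𝓕 (i - 1))) (𝓕 (j - 1)) (𝓕 j) (g x) =
        nQuotMap N (𝓕 i) (𝓕 (i - 1)) (𝓕 j) (𝓕 (j - 1)) hjle x := by
  classical
  -- abbreviations
  set P := Submodule.map N (𝓕 (i - 1)) with hP
  set Pi' := Submodule.map N (𝓕 i) with hPi'
  set SJ := P ⊔ 𝓕 j with hSJ
  set SJm := P ⊔ 𝓕 (j - 1) with hSJm
  set U := Pi' ⊔ SJm with hU
  -- basic order facts
  have hsub : ∀ k, 1 ≤ k → k ≤ n → 𝓕 (k - 1) ≤ 𝓕 k := by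
    intro k hk1 hkn
    have h := hmono (k - 1) (by omega)
    rwa [Nat.sub_add_cancel hk1] at h
  have him1 : i - 1 ≤ n := by omega
  have hjm1 : j - 1 ≤ n := by omega
  have hPle : P ≤ Pi' := Submodule.map_mono (hsub i hi1 hin)
  have hSJmle : SJm ≤ SJ := sup_le_sup_left (hsub j hj1 hjn) P
  have hUle : U ≤ SJ := sup_le hjle hSJmle
  -- key non-inclusion
  have hnotle : ¬ (Pi' ≤ SJm) := by
    intro hcon
    rcases Nat.lt_or_ge j 2 with hj2 | hj2
    · have hj1' : j = 1 := by omega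
      rw [hSJm, hj1', h𝓕0] at hcon
      simp only [Nat.sub_self, sup_bot_eq] at hcon
      exact hlt.not_ge hcon
    · have := hjmin (j - 1) (by omega) hjm1 hcon
      omega
  -- the constant p as an invertible element of A
  have hpE : (p : E) ≠ 0 := Nat.cast_ne_zero.mpr hp.ne_zero
  have hφconst : ∀ (e : E) (x : D),
      φ (((fun _ => e) : Fin f → E) • x) = ((fun _ => e) : Fin f → E) • φ x := by
    intro e x
    rw [hφ]
    congr 1
    funext i'
    rw [hσ]
  have hφNimg : ∀ k, k ≤ n → ∀ x ∈ Submodule.map N (𝓕 k), φ x ∈ Submodule.map N (𝓕 k) := by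
    intro k hkn x hx
    obtain ⟨y, hy, rfl⟩ := hx
    have h1 : N (φ y) = p • φ (N y) := hNφ y
    have h2 : φ (N y) = ((fun _ => (p : E)⁻¹) : Fin f → E) • N (φ y) := by
      rw [h1]
      have h3 : (p : ℕ) • φ (N y) = ((fun _ => (p : E)) : Fin f → E) • φ (N y) := by
        rw [← Nat.cast_smul_eq_nsmul (Fin f → E)]
        congr 1
      rw [h3, ← mul_smul]
      have h4 : (((fun _ => (p : E)⁻¹) : Fin f → E) * fun _ => (p : E)) = 1 := by
        funext i'
        exact inv_mul_cancel₀ hpE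
      rw [h4, one_smul]
    rw [h2]
    exact Submodule.smul_mem _ _ (Submodule.mem_map_of_mem (hφstab k hkn y hy))
  have hφP : ∀ x ∈ P, φ x ∈ P := hφNimg (i - 1) him1
  have hφPi' : ∀ x ∈ Pi', φ x ∈ Pi' := hφNimg i hin
  have hφSJ : ∀ x ∈ SJ, φ x ∈ SJ := by
    intro x hx
    obtain ⟨a, ha, b, hb, rfl⟩ := Submodule.mem_sup.mp hx
    rw [map_add]
    exact Submodule.add_mem_sup (hφP a ha) (hφstab j hjn b hb)
  have hφSJm : ∀ x ∈ SJm, φ x ∈ SJm := by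
    intro x hx
    obtain ⟨a, ha, b, hb, rfl⟩ := Submodule.mem_sup.mp hx
    rw [map_add]
    exact Submodule.add_mem_sup (hφP a ha) (hφstab (j - 1) hjm1 b hb)
  have hφU : ∀ x ∈ U, φ x ∈ U := by
    intro x hx
    obtain ⟨a, ha, b, hb, rfl⟩ := Submodule.mem_sup.mp hx
    rw [map_add]
    exact Submodule.add_mem_sup (hφPi' a ha) (hφSJm b hb)
  have hφSJsurj : ∀ y ∈ SJ, ∃ x ∈ SJ, φ x = y := stab_surj' φ hφconst SJ hφSJ
  -- the semilinear bijection ψ on the quotient T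
  let Tq := (↥SJ ⧸ SJm.comap SJ.subtype)
  have hwd : ∀ (a b : ↥SJ), @Setoid.r _ (Submodule.quotientRel (SJm.comap SJ.subtype)) a b →
      (Submodule.Quotient.mk (⟨φ ↑a, hφSJ _ a.2⟩ : ↥SJ) : Tq) =
        Submodule.Quotient.mk ⟨φ ↑b, hφSJ _ b.2⟩ := by
    intro a b hab
    have h1 : (Submodule.Quotient.mk a : Tq) = Submodule.Quotient.mk b := Quotient.sound' hab
    rw [Submodule.Quotient.eq] at h1 ⊢
    simp only [Submodule.mem_comap, Submodule.subtype_apply] at h1 ⊢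
    have : (↑(a - b) : D) = ↑a - ↑b := rfl
    rw [this] at h1
    show φ ↑a - φ ↑b ∈ SJm
    rw [← map_sub]
    exact hφSJm _ h1
  let ψ : Tq → Tq := fun t => Quotient.liftOn' t
    (fun x : ↥SJ => Submodule.Quotient.mk (⟨φ ↑x, hφSJ _ x.2⟩ : ↥SJ)) hwd
  have hψmk : ∀ x : ↥SJ, ψ (Submodule.Quotient.mk x) =
      Submodule.Quotient.mk ⟨φ ↑x, hφSJ _ x.2⟩ := fun x => rfl
  have hψsurj : Function.Surjective ψ := by
    intro t
    obtain ⟨y, rfl⟩ := Submodule.Quotient.mk_surjective _ t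
    obtain ⟨x, hx, hfx⟩ := hφSJsurj ↑y y.2
    exact ⟨Submodule.Quotient.mk ⟨x, hx⟩, by rw [hψmk]; congr 1; exact Subtype.ext hfx⟩
  have hψsem : ∀ (a : Fin f → E) (t : Tq), ψ (a • t) = σ a • ψ t := by
    intro a t
    obtain ⟨y, rfl⟩ := Submodule.Quotient.mk_surjective _ t
    rw [← Submodule.Quotient.mk_smul, hψmk, hψmk, ← Submodule.Quotient.mk_smul]
    congr 1
    ext
    show φ (a • ↑y) = σ a • φ ↑y
    rw [hφ]
  have hψsub : ∀ s t : Tq, ψ (s - t) = ψ s - ψ t := by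
    intro s t
    obtain ⟨x, rfl⟩ := Submodule.Quotient.mk_surjective _ s
    obtain ⟨y, rfl⟩ := Submodule.Quotient.mk_surjective _ t
    rw [← Submodule.Quotient.mk_sub, hψmk, hψmk, hψmk, ← Submodule.Quotient.mk_sub]
    congr 1
    ext
    show φ (↑x - ↑y) = φ ↑x - φ ↑y
    rw [map_sub]
  -- T is nonzero
  have hTne : ¬ (∀ t : Tq, t = 0) := by
    intro h
    apply hnotle
    refine le_trans hjle ?_
    intro v hv
    have h0 := h (Submodule.Quotient.mk ⟨v, hv⟩)
    rw [Submodule.Quotient.mk_eq_zero] at h0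
    exact h0
  -- the inclusion-induced map and its surjectivity
  set incl := inclQuotMap P (𝓕 (j - 1)) (𝓕 j) with hincl
  have hincl_mk : ∀ x : ↥(𝓕 j), incl (Submodule.Quotient.mk x) =
      (Submodule.Quotient.mk ⟨↑x, Submodule.mem_sup_right x.2⟩ : Tq) := by
    intro x
    rw [hincl]
    unfold inclQuotMap
    rw [Submodule.liftQ_apply]
    rfl
  have hincl_surj : Function.Surjective incl := by
    intro t
    obtain ⟨y, rfl⟩ := Submodule.Quotient.mk_surjective _ t
    obtain ⟨w, hw, r, hr, hwr⟩ := Submodule.mem_sup.mp y.2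
    refine ⟨Submodule.Quotient.mk ⟨r, hr⟩, ?_⟩
    rw [hincl_mk]
    rw [Submodule.Quotient.eq]
    simp only [Submodule.mem_comap, Submodule.subtype_apply]
    have : (↑((⟨r, Submodule.mem_sup_right hr⟩ : ↥SJ) - y) : D) = r - ↑y := rfl
    rw [this, ← hwr]
    have : r - (w + r) = -w := by abel
    rw [this]
    exact neg_mem (Submodule.mem_sup_left hw)
  obtain ⟨ej⟩ := hrank1 j hj1 hjn
  obtain ⟨ei⟩ := hrank1 i hi1 hin
  have hb1 : Function.Bijective incl := by
    have hg1surj : Function.Surjective (incl ∘ₗ ej.symm.toLinearMap) := by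
      intro t
      obtain ⟨s, hs⟩ := hincl_surj t
      exact ⟨ej s, by simp [hs]⟩
    rcases master' σ hσ ψ hψsurj hψsem _ hg1surj with h | h
    · exact absurd h hTne
    · have hcoe : ⇑incl = ⇑(incl ∘ₗ ej.symm.toLinearMap) ∘ ⇑ej := by
        funext x
        simp
      rw [hcoe]
      exact h.comp ej.bijective
  -- the N-induced map
  set nmap := nQuotMap N (𝓕 i) (𝓕 (i - 1)) (𝓕 j) (𝓕 (j - 1)) hjle with hnmap
  have hn_mk : ∀ x : ↥(𝓕 i), nmap (Submodule.Quotient.mk x) =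
      (Submodule.Quotient.mk ⟨N ↑x, hjle (Submodule.mem_map_of_mem x.2)⟩ : Tq) := by
    intro x
    rw [hnmap]
    unfold nQuotMap
    rw [Submodule.liftQ_apply]
    rfl
  -- range of nmap
  have hrange : ∀ (v : D) (hv : v ∈ SJ),
      ((Submodule.Quotient.mk ⟨v, hv⟩ : Tq) ∈ LinearMap.range nmap) ↔ v ∈ U := by
    intro v hv
    constructor
    · rintro ⟨s, hs⟩
      obtain ⟨x, rfl⟩ := Submodule.Quotient.mk_surjective _ s
      rw [hn_mk] at hs
      rw [Submodule.Quotient.eq] at hs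
      simp only [Submodule.mem_comap, Submodule.subtype_apply] at hs
      have hcoe : (↑((⟨N ↑x, hjle (Submodule.mem_map_of_mem x.2)⟩ : ↥SJ) - ⟨v, hv⟩) : D)
          = N ↑x - v := rfl
      rw [hcoe] at hs
      have : v = N ↑x - (N ↑x - v) := by abel
      rw [this]
      exact Submodule.sub_mem _ (Submodule.mem_sup_left (Submodule.mem_map_of_mem x.2))
        (Submodule.mem_sup_right hs)
    · intro hvU
      obtain ⟨u, hu, w, hw, hvw⟩ := Submodule.mem_sup.mp hvU
      obtain ⟨x, hx, rfl⟩ := hu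
      refine ⟨Submodule.Quotient.mk ⟨x, hx⟩, ?_⟩
      rw [hn_mk, Submodule.Quotient.eq]
      simp only [Submodule.mem_comap, Submodule.subtype_apply]
      have hcoe : (↑((⟨N x, hjle (Submodule.mem_map_of_mem hx)⟩ : ↥SJ) - ⟨v, hv⟩) : D)
          = N x - v := rfl
      rw [hcoe, ← hvw]
      have : N x - (N x + w) = -w := by abel
      rw [this]
      exact neg_mem hw
  have hψrange : ∀ t ∈ LinearMap.range nmap, ψ t ∈ LinearMap.range nmap := by
    intro t ht
    obtain ⟨y, rfl⟩ := Submodule.Quotient.mk_surjective _ t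
    have h1 : (↑y : D) ∈ U := (hrange ↑y y.2).mp ht
    have h2 : φ ↑y ∈ U := hφU _ h1
    have h3 := (hrange (φ ↑y) (hUle h2)).mpr h2
    rw [hψmk]
    exact h3
  -- surjectivity of nmap via the cokernel
  have hn_surj : Function.Surjective nmap := by
    let R := LinearMap.range nmap
    let M' := Tq ⧸ R
    have hwd2 : ∀ (a b : Tq), @Setoid.r _ (Submodule.quotientRel R) a b →
        (Submodule.Quotient.mk (ψ a) : M') = Submodule.Quotient.mk (ψ b) := by
      intro a b hab
      have h1 : (Submodule.Quotient.mk a : M') = Submodule.Quotient.mk b := Quotient.sound' hab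
      rw [Submodule.Quotient.eq] at h1 ⊢
      rw [← hψsub]
      exact hψrange _ h1
    let ψ' : M' → M' := fun m => Quotient.liftOn' m (fun t => Submodule.Quotient.mk (ψ t)) hwd2
    have hψ'mk : ∀ t : Tq, ψ' (Submodule.Quotient.mk t) = Submodule.Quotient.mk (ψ t) :=
      fun t => rfl
    have hψ'surj : Function.Surjective ψ' := by
      intro m
      obtain ⟨t, rfl⟩ := Submodule.Quotient.mk_surjective _ m
      obtain ⟨s, rfl⟩ := hψsurj t
      exact ⟨Submodule.Quotient.mk s, rfl⟩
    have hψ'sem : ∀ (a : Fin f → E) (m : M'), ψ' (a • m) = σ a • ψ' m := by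
      intro a m
      obtain ⟨t, rfl⟩ := Submodule.Quotient.mk_surjective _ m
      rw [← Submodule.Quotient.mk_smul, hψ'mk, hψ'mk, hψsem, Submodule.Quotient.mk_smul]
    let g1 := incl ∘ₗ ej.symm.toLinearMap
    have hg1surj : Function.Surjective g1 := by
      intro t
      obtain ⟨s, hs⟩ := hincl_surj t
      exact ⟨ej s, by simp [g1, hs]⟩
    let g' := R.mkQ ∘ₗ g1
    have hg'surj : Function.Surjective g' := by
      intro m
      obtain ⟨t, rfl⟩ := Submodule.Quotient.mk_surjective _ m
      obtain ⟨a, rfl⟩ := hg1surj t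
      exact ⟨a, rfl⟩
    rcases master' σ hσ ψ' hψ'surj hψ'sem g' hg'surj with h | h
    · -- cokernel is zero: nmap surjective
      intro t
      have := h (Submodule.Quotient.mk t)
      rw [Submodule.Quotient.mk_eq_zero] at this
      exact this
    · -- g' bijective: contradiction with minimality
      exfalso
      apply hnotle
      intro v hv
      obtain ⟨x, hx, rfl⟩ := hv
      have ht : nmap (Submodule.Quotient.mk ⟨x, hx⟩) ∈ R := ⟨_, rfl⟩
      obtain ⟨a, ha⟩ := hg1surj (nmap (Submodule.Quotient.mk ⟨x, hx⟩))
      have h0 : g' a = 0 := by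
        show R.mkQ (g1 a) = 0
        rw [ha]
        rw [Submodule.mkQ_apply, Submodule.Quotient.mk_eq_zero]
        exact ht
      have ha0 : a = 0 := h.injective (by rw [h0, map_zero])
      rw [ha0, map_zero] at ha
      have := ha.symm
      rw [hn_mk] at this
      rw [Submodule.Quotient.mk_eq_zero] at this
      exact this
  -- bijectivity of nmap
  have hb2 : Function.Bijective nmap := by
    have hg2surj : Function.Surjective (nmap ∘ₗ ei.symm.toLinearMap) := by
      intro t
      obtain ⟨s, hs⟩ := hn_surj t
      exact ⟨ei s, by simp [hs]⟩
    rcases master' σ hσ ψ hψsurj hψsem _ hg2surj with h | h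
    · exact absurd h hTne
    · have hcoe : ⇑nmap = ⇑(nmap ∘ₗ ei.symm.toLinearMap) ∘ ⇑ei := by
        funext x
        simp
      rw [hcoe]
      exact h.comp ei.bijective
  refine ⟨hb1, hb2, ?_⟩
  let e1 := LinearEquiv.ofBijective incl hb1
  let e2 := LinearEquiv.ofBijective nmap hb2
  refine ⟨e2.trans e1.symm, ?_⟩
  intro x
  show incl (e1.symm (e2 x)) = nmap x
  have : incl (e1.symm (e2 x)) = e1 (e1.symm (e2 x)) := rfl
  rw [this, e1.apply_symm_apply]
  rfl
end

section
/- Let (D, φ, N) be an E-(φ,N)-module over A equipped with a refinement 𝓕 of length n, and let s, t ∈ {1,…,n}. Then the following two assertions are equivalent: (1) N(𝓕ₜ₋₁) is strictly contained in N(𝓕ₜ) and s is the least index j ∈ {1,…,n} such that N(𝓕ₜ) ⊆ N(𝓕ₜ₋₁) + 𝓕ⱼ (i.e. s is marked for 𝓕 with t = t_𝓕(s)); (2) N(𝓕ₜ₋₁) ∩ 𝓕ₛ = N(𝓕ₜ₋₁) ∩ 𝓕ₛ₋₁ and N(𝓕ₜ) ∩ 𝓕ₛ₋₁ is strictly contained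 in N(𝓕ₜ) ∩ 𝓕ₛ. -/
set_option linter.unusedSectionVars false
open scoped Fin.NatCast Fin.CommRing

section Aux
variable {E : Type*} [Field E] {f : ℕ} [NeZero f]
variable {D : Type*} [AddCommGroup D] [Module (Fin f → E) D]

lemma iter_smul (σ : (Fin f → E) ≃+* (Fin f → E)) (φ : D ≃+ D)
    (hφ : ∀ (a : Fin f → E) (x : D), φ (a • x) = σ a • φ x) :
    ∀ (k : ℕ) (a : Fin f → E) (x : D),
      (⇑φ)^[k] (a • x) = ((⇑σ)^[k] a) • (⇑φ)^[k] x := by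
  intro k
  induction k with
  | zero => intro a x; simp
  | succ m ih =>
    intro a x
    simp only [Function.iterate_succ_apply, hφ, ih]

lemma iter_shift (σ : (Fin f → E) ≃+* (Fin f → E))
    (hσ : ∀ (x : Fin f → E) (i : Fin f), σ x i = x (i + 1)) :
    ∀ (k : ℕ) (a : Fin f → E) (i : Fin f), (⇑σ)^[k] a i = a (i + (k : Fin f)) := by
  intro k
  induction k with
  | zero => intro a i; simp
  | succ m ih =>
    intro a i
    rw [Function.iterate_succ_apply, ih, hσ]
    congr 1
    push_cast
    ring

lemma iter_shift_f (σ : (Fin f → E) ≃+* (Fin f → E))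
    (hσ : ∀ (x : Fin f → E) (i : Fin f), σ x i = x (i + 1)) (a : Fin f → E) :
    (⇑σ)^[f] a = a := by
  funext i
  rw [iter_shift σ hσ, Fin.natCast_self, add_zero]

lemma iter_add (φ : D ≃+ D) : ∀ (k : ℕ) (x y : D),
    (⇑φ)^[k] (x + y) = (⇑φ)^[k] x + (⇑φ)^[k] y := by
  intro k
  induction k with
  | zero => intro x y; rfl
  | succ m ih => intro x y; simp only [Function.iterate_succ_apply, map_add, ih]

/-- If a submodule is mapped into itself by `φ`, then (by artinianness) `φ` maps onto it. -/
lemma surj_stab [Module.Finite (Fin f → E) D]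
    (σ : (Fin f → E) ≃+* (Fin f → E))
    (hσ : ∀ (x : Fin f → E) (i : Fin f), σ x i = x (i + 1))
    (φ : D ≃+ D)
    (hφ : ∀ (a : Fin f → E) (x : D), φ (a • x) = σ a • φ x)
    (W : Submodule (Fin f → E) D) (hW : ∀ x ∈ W, φ x ∈ W) :
    ∀ z ∈ W, ∃ w ∈ W, φ w = z := by
  have hf : 1 ≤ f := Nat.one_le_iff_ne_zero.mpr (NeZero.ne f)
  let ψ : D →ₗ[Fin f → E] D :=
    { toFun := (⇑φ)^[f]
      map_add' := iter_add φ f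
      map_smul' := by
        intro a x
        simp only [RingHom.id_apply]
        rw [iter_smul σ φ hφ, iter_shift_f σ hσ] }
  have hψinj : Function.Injective ψ := φ.injective.iterate f
  have hstabk : ∀ (k : ℕ), ∀ x ∈ W, (⇑φ)^[k] x ∈ W := by
    intro k
    induction k with
    | zero => intro x hx; exact hx
    | succ m ih => intro x hx; exact (Function.iterate_succ_apply' (⇑φ) m x) ▸ hW _ (ih x hx)
  have hres : ∀ x ∈ W, ψ x ∈ W := fun x hx => hstabk f x hx
  let g : W →ₗ[Fin f → E] W := ψ.restrict hres
  have hg : Function.Injective g := by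
    intro a b hab
    exact Subtype.ext (hψinj (congrArg Subtype.val hab))
  intro z hz
  obtain ⟨w, hw⟩ := IsArtinian.surjective_of_injective_endomorphism g hg ⟨z, hz⟩
  refine ⟨(⇑φ)^[f - 1] w.1, hstabk (f - 1) w.1 w.2, ?_⟩
  have h1 : (⇑φ)^[f] w.1 = z := congrArg Subtype.val hw
  have h2 : f - 1 + 1 = f := by omega
  calc φ ((⇑φ)^[f - 1] w.1) = (⇑φ)^[f - 1 + 1] w.1 := (Function.iterate_succ_apply' (⇑φ) (f - 1) w.1).symm
    _ = z := by rw [h2, h1]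
variable {E : Type*} [Field E] {f : ℕ} [NeZero f]
variable {D : Type*} [AddCommGroup D] [Module (Fin f → E) D]

lemma mem_of_components (W : Submodule (Fin f → E) D) (v : D)
    (h : ∀ i : Fin f, (Pi.single i 1 : Fin f → E) • v ∈ W) : v ∈ W := by
  have hs : (∑ i : Fin f, (Pi.single i 1 : Fin f → E)) • v ∈ W := by
    rw [Finset.sum_smul]
    exact Submodule.sum_mem _ fun i _ => h i
  rwa [show (∑ i : Fin f, (Pi.single i 1 : Fin f → E)) = 1 by
    simpa using Finset.univ_sum_single (1 : Fin f → E), one_smul] at hs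

lemma spread_lemma [Module.Finite (Fin f → E) D]
    (σ : (Fin f → E) ≃+* (Fin f → E))
    (hσ : ∀ (x : Fin f → E) (i : Fin f), σ x i = x (i + 1))
    (φ : D ≃+ D)
    (hφ : ∀ (a : Fin f → E) (x : D), φ (a • x) = σ a • φ x)
    (W Z : Submodule (Fin f → E) D)
    (hW : ∀ x ∈ W, φ x ∈ W) (hZ : ∀ x ∈ Z, φ x ∈ Z)
    (hex : ¬ W ≤ Z) :
    ∀ j : Fin f, ∃ w ∈ W, (Pi.single j 1 : Fin f → E) • w ∉ Z := by
  have hσδ : ∀ i : Fin f, σ (Pi.single i 1) = Pi.single (i - 1) (1 : E) := by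
    intro i
    funext j
    rw [hσ]
    simp only [Pi.single_apply]
    exact if_congr eq_sub_iff_add_eq.symm rfl rfl
  have hφδ : ∀ (i : Fin f) (w : D),
      φ ((Pi.single i 1 : Fin f → E) • w) = (Pi.single (i-1) 1 : Fin f → E) • φ w := by
    intro i w; rw [hφ, hσδ]
  have hZsat : ∀ u : D, φ u ∈ Z → u ∈ Z := by
    intro u hu
    obtain ⟨z, hzZ, hzu⟩ := surj_stab σ hσ φ hφ Z hZ (φ u) hu
    rwa [← φ.injective hzu]
  obtain ⟨w₀, hw₀W, hw₀Z⟩ := SetLike.not_le_iff_exists.mp hex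
  have hex' : ∃ i : Fin f, (Pi.single i 1 : Fin f → E) • w₀ ∉ Z := by
    by_contra hc
    push_neg at hc
    exact hw₀Z (mem_of_components Z w₀ hc)
  obtain ⟨i, hi⟩ := hex'
  have key : ∀ k : ℕ, ∃ w ∈ W, (Pi.single (i - (k : Fin f)) 1 : Fin f → E) • w ∉ Z := by
    intro k
    induction k with
    | zero => exact ⟨w₀, hw₀W, by simpa using hi⟩
    | succ m ih =>
      obtain ⟨u, huW, hum⟩ := ih
      refine ⟨φ u, hW u huW, fun hc => hum ?_⟩
      have hcast : i - ((m + 1 : ℕ) : Fin f) = i - (m : Fin f) - 1 := by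
        push_cast; ring
      have h2 : φ ((Pi.single (i - (m : Fin f)) 1 : Fin f → E) • u) ∈ Z := by
        rw [hφδ, ← hcast]; exact hc
      exact hZsat _ h2
  intro j
  have : ∃ k : ℕ, i - (k : Fin f) = j :=
    ⟨(i - j : Fin f).val, by rw [Fin.cast_val_eq_self]; exact sub_sub_cancel i j⟩
  obtain ⟨k, hk⟩ := this
  exact hk ▸ key k

end Aux


section Aux2
variable {E : Type*} [Field E] {f : ℕ} [NeZero f]
variable {D : Type*} [AddCommGroup D] [Module (Fin f → E) D]
variable (F G : Submodule (Fin f → E) D)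

private lemma single_mul' (i : Fin f) (e : E) (a : Fin f → E) :
    Pi.single i e * a = Pi.single i (e * a i) := by
  funext j
  rcases eq_or_ne j i with rfl | hne
  · simp
  · simp [Pi.single_eq_of_ne hne]

noncomputable def qq (q : (F ⧸ G.comap F.subtype) ≃ₗ[Fin f → E] (Fin f → E)) : F →ₗ[Fin f → E] (Fin f → E) :=
  q.toLinearMap.comp (G.comap F.subtype).mkQ

lemma qq_ker (q : (F ⧸ G.comap F.subtype) ≃ₗ[Fin f → E] (Fin f → E)) (z : F) : qq F G q z = 0 ↔ (z : D) ∈ G := by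
  have h1 : qq F G q z = q (Submodule.Quotient.mk z) := rfl
  rw [h1, LinearEquiv.map_eq_zero_iff, Submodule.Quotient.mk_eq_zero,
    Submodule.mem_comap, Submodule.subtype_apply]

lemma grad_lemma (q : (F ⧸ G.comap F.subtype) ≃ₗ[Fin f → E] (Fin f → E)) (x y : D) (hx : x ∈ F) (hy : y ∈ F) (i : Fin f)
    (hxi : (Pi.single i 1 : Fin f → E) • x ∉ G) :
    (Pi.single i 1 : Fin f → E) • y ∈ G ⊔ Submodule.span (Fin f → E) {x} := by
  set xk : F := ⟨x, hx⟩
  set yk : F := ⟨y, hy⟩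
  set a := qq F G q xk with ha_def
  set b := qq F G q yk with hb_def
  have hai : a i ≠ 0 := by
    intro h0
    have h1 : qq F G q ((Pi.single i 1 : Fin f → E) • xk) = 0 := by
      rw [map_smul, smul_eq_mul, ← ha_def, single_mul', one_mul, h0, Pi.single_zero]
    have h2 := (qq_ker F G q _).mp h1
    exact hxi (by simpa using h2)
  set c : Fin f → E := Pi.single i (b i * (a i)⁻¹) with hc_def
  have hz : qq F G q ((Pi.single i 1 : Fin f → E) • yk - c • xk) = 0 := by
    rw [map_sub, map_smul, map_smul, smul_eq_mul, smul_eq_mul, ← ha_def, ← hb_def,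
      single_mul', one_mul, hc_def, single_mul', inv_mul_cancel_right₀ hai, sub_self]
  have hmem := (qq_ker F G q _).mp hz
  have hcoe : (((Pi.single i 1 : Fin f → E) • yk - c • xk : F) : D)
      = (Pi.single i 1 : Fin f → E) • y - c • x := rfl
  rw [hcoe] at hmem
  have hsplit : (Pi.single i 1 : Fin f → E) • y
      = ((Pi.single i 1 : Fin f → E) • y - c • x) + c • x := by abel
  rw [hsplit]
  exact Submodule.add_mem _ (Submodule.mem_sup_left hmem)
    (Submodule.mem_sup_right (Submodule.smul_mem _ c (Submodule.mem_span_singleton_self x)))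

lemma gen_lemma (q : (F ⧸ G.comap F.subtype) ≃ₗ[Fin f → E] (Fin f → E)) : ∃ e, e ∈ F ∧ F ≤ G ⊔ Submodule.span (Fin f → E) {e} := by
  have hsurj : Function.Surjective (qq F G q) := by
    intro b
    obtain ⟨u, hu⟩ := Submodule.mkQ_surjective (G.comap F.subtype) (q.symm b)
    refine ⟨u, ?_⟩
    show q ((G.comap F.subtype).mkQ u) = b
    rw [hu, LinearEquiv.apply_symm_apply]
  obtain ⟨e', he'⟩ := hsurj 1
  refine ⟨(e' : D), e'.2, ?_⟩
  intro x hx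
  set a := qq F G q ⟨x, hx⟩ with ha_def
  have hz : qq F G q (⟨x, hx⟩ - a • e') = 0 := by
    rw [map_sub, map_smul, he', smul_eq_mul, mul_one, ← ha_def, sub_self]
  have hmem := (qq_ker F G q _).mp hz
  have hcoe : ((⟨x, hx⟩ - a • e' : F) : D) = x - a • (e' : D) := rfl
  rw [hcoe] at hmem
  have hsplit : x = (x - a • (e' : D)) + a • (e' : D) := by abel
  rw [hsplit]
  exact Submodule.add_mem _ (Submodule.mem_sup_left hmem)
    (Submodule.mem_sup_right (Submodule.smul_mem _ a (Submodule.mem_span_singleton_self _)))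

end Aux2


/-- Let `(D, φ, N)` be an `E`-`(φ,N)`-module over `A = (Fin f → E)` (with `σ` the
cyclic shift automorphism of `A`) equipped with a refinement `𝓕` of length `n`,
and let `s, t ∈ {1,…,n}`. Then the following are equivalent:
(1) `N(𝓕ₜ₋₁) ⊊ N(𝓕ₜ)` and `s` is the least index `j ∈ {1,…,n}` such that
`N(𝓕ₜ) ⊆ N(𝓕ₜ₋₁) + 𝓕ⱼ` (i.e. `s` is marked for `𝓕` with `t = t_𝓕(s)`);
(2) `N(𝓕ₜ₋₁) ∩ 𝓕ₛ = N(𝓕ₜ₋₁) ∩ 𝓕ₛ₋₁` and `N(𝓕ₜ) ∩ 𝓕ₛ₋₁ ⊊ N(𝓕ₜ) ∩ 𝓕ₛ`. -/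
theorem marked_index_iff
    {E : Type*} [Field E] [CharZero E] (p : ℕ) (hp : p.Prime)
    (f : ℕ) [NeZero f] (hf : 1 ≤ f)
    (σ : (Fin f → E) ≃+* (Fin f → E))
    (hσ : ∀ (x : Fin f → E) (i : Fin f), σ x i = x (i + 1))
    (D : Type*) [AddCommGroup D] [Module (Fin f → E) D]
    [Module.Finite (Fin f → E) D] [Module.Free (Fin f → E) D]
    (φ : D ≃+ D)
    (hφ : ∀ (a : Fin f → E) (x : D), φ (a • x) = σ a • φ x)
    (N : D →ₗ[Fin f → E] D)
    (hNφ : ∀ x : D, N (φ x) = p • φ (N x))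
    (n : ℕ) (𝓕 : ℕ → Submodule (Fin f → E) D)
    (h𝓕0 : 𝓕 0 = ⊥) (h𝓕n : 𝓕 n = ⊤)
    (hmono : ∀ k, k < n → 𝓕 k ≤ 𝓕 (k + 1))
    (hφstab : ∀ k, k ≤ n → ∀ x ∈ 𝓕 k, φ x ∈ 𝓕 k)
    (hNstab : ∀ k, k ≤ n → ∀ x ∈ 𝓕 k, N x ∈ 𝓕 k)
    (hrank1 : ∀ k, 1 ≤ k → k ≤ n →
      Nonempty ((𝓕 k ⧸ (𝓕 (k - 1)).comap (𝓕 k).subtype) ≃ₗ[Fin f → E] (Fin f → E)))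
    (s t : ℕ) (hs1 : 1 ≤ s) (hsn : s ≤ n) (ht1 : 1 ≤ t) (htn : t ≤ n) :
    (Submodule.map N (𝓕 (t - 1)) < Submodule.map N (𝓕 t) ∧
      Submodule.map N (𝓕 t) ≤ Submodule.map N (𝓕 (t - 1)) ⊔ 𝓕 s ∧
      ∀ j, 1 ≤ j → j ≤ n →
        Submodule.map N (𝓕 t) ≤ Submodule.map N (𝓕 (t - 1)) ⊔ 𝓕 j → s ≤ j)
    ↔
    (Submodule.map N (𝓕 (t - 1)) ⊓ 𝓕 s = Submodule.map N (𝓕 (t - 1)) ⊓ 𝓕 (s - 1) ∧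
      Submodule.map N (𝓕 t) ⊓ 𝓕 (s - 1) < Submodule.map N (𝓕 t) ⊓ 𝓕 s) := by
  classical
  -- monotonicity of the filtration
  have F0 : ∀ j k, j ≤ k → k ≤ n → 𝓕 j ≤ 𝓕 k := by
    intro j k hjk hkn
    induction k with
    | zero => simp_all
    | succ m ih =>
      rcases Nat.lt_or_ge j (m + 1) with h | h
      · exact (ih (Nat.lt_succ_iff.mp h) (le_trans (Nat.le_succ m) hkn)).trans
          (hmono m (by omega))
      · have : j = m + 1 := le_antisymm hjk h
        subst this; exact le_rfl
  set M' := Submodule.map N (𝓕 (t - 1)) with hM'def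
  set M := Submodule.map N (𝓕 t) with hMdef
  have htn' : t - 1 ≤ n := le_trans (Nat.sub_le t 1) htn
  have hsn' : s - 1 ≤ n := le_trans (Nat.sub_le s 1) hsn
  have hM'M : M' ≤ M := Submodule.map_mono (F0 (t - 1) t (Nat.sub_le t 1) htn)
  have hFs : 𝓕 (s - 1) ≤ 𝓕 s := F0 (s - 1) s (Nat.sub_le s 1) hsn
  have hp0 : ((p : E) ≠ 0) := Nat.cast_ne_zero.mpr hp.ne_zero
  -- φ-stability of images of N
  have hφmap : ∀ k, k ≤ n → ∀ y ∈ Submodule.map N (𝓕 k), φ y ∈ Submodule.map N (𝓕 k) := by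
    rintro k hk y ⟨x, hx, rfl⟩
    have h1 : N (φ x) = ((p : ℕ) : Fin f → E) • φ (N x) := by
      rw [hNφ x]; exact (Nat.cast_smul_eq_nsmul _ _ _).symm
    have hNφx : N (φ x) ∈ Submodule.map N (𝓕 k) := ⟨φ x, hφstab k hk x hx, rfl⟩
    have h2 : φ (N x) = ((fun _ => ((p : E))⁻¹ : Fin f → E)) • N (φ x) := by
      rw [h1, smul_smul]
      have hone : ((fun _ => ((p : E))⁻¹ : Fin f → E) * ((p : ℕ) : Fin f → E)) = 1 := by
        funext j
        show ((p : E))⁻¹ * ((p : ℕ) : Fin f → E) j = 1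
        rw [Pi.natCast_apply, inv_mul_cancel₀ hp0]
      rw [hone, one_smul]
    rw [h2]
    exact Submodule.smul_mem _ _ hNφx
  have hφM : ∀ x ∈ M, φ x ∈ M := hφmap t htn
  have hφM' : ∀ x ∈ M', φ x ∈ M' := hφmap (t - 1) htn'
  -- cyclic generator for M over M'
  obtain ⟨qt⟩ := hrank1 t ht1 htn
  obtain ⟨e, heF, hgen⟩ := gen_lemma (𝓕 t) (𝓕 (t - 1)) qt
  set v := N e with hv_def
  have hMle : M ≤ M' ⊔ Submodule.span (Fin f → E) {v} := by
    rintro y ⟨x, hx, rfl⟩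
    obtain ⟨u, hu, z, hz, hxe⟩ := Submodule.mem_sup.mp (hgen hx)
    obtain ⟨a, rfl⟩ := Submodule.mem_span_singleton.mp hz
    have hNx : N x = N u + a • v := by rw [← hxe, map_add, map_smul]
    rw [hNx]
    exact Submodule.add_mem _ (Submodule.mem_sup_left ⟨u, hu, rfl⟩)
      (Submodule.mem_sup_right (Submodule.smul_mem _ a (Submodule.mem_span_singleton_self v)))
  -- the graded-piece lemma at level s
  obtain ⟨qs⟩ := hrank1 s hs1 hsn
  have grad_s := grad_lemma (𝓕 s) (𝓕 (s - 1)) qs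
  -- spreading witnesses over all components
  have hspread : ∀ (W : Submodule (Fin f → E) D), (∀ x ∈ W, φ x ∈ W) → ¬ (W ≤ 𝓕 (s - 1)) →
      ∀ j : Fin f, ∃ w ∈ W, (Pi.single j 1 : Fin f → E) • w ∉ 𝓕 (s - 1) :=
    fun W hW hne => spread_lemma σ hσ φ hφ W (𝓕 (s - 1)) hW (hφstab (s - 1) hsn') hne
  constructor
  · rintro ⟨h1, h2, h3⟩
    have hblock : ¬ (M ≤ M' ⊔ 𝓕 (s - 1)) := by
      intro hle
      by_cases hs' : s = 1
      · have : M ≤ M' := by simpa [hs', h𝓕0] using hle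
        exact h1.not_ge this
      · have := h3 (s - 1) (by omega) (by omega) hle
        omega
    constructor
    · refine le_antisymm ?_ (inf_le_inf_left _ hFs)
      by_contra hc
      have hc' : ¬ (M' ⊓ 𝓕 s ≤ 𝓕 (s - 1)) := fun h => hc (le_inf inf_le_left h)
      have hW : ∀ x ∈ M' ⊓ 𝓕 s, φ x ∈ M' ⊓ 𝓕 s :=
        fun x hx => ⟨hφM' x hx.1, hφstab s hsn x hx.2⟩
      have hsp := hspread _ hW hc'
      have h𝓕sub : 𝓕 s ≤ 𝓕 (s - 1) ⊔ M' := by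
        intro y hy
        apply mem_of_components
        intro i
        obtain ⟨w, hwmem, hwi⟩ := hsp i
        have hg := grad_s w y hwmem.2 hy i hwi
        have hspan : Submodule.span (Fin f → E) {w} ≤ M' :=
          Submodule.span_le.mpr (by simpa using hwmem.1)
        exact sup_le_sup_left hspan _ hg
      apply hblock
      calc M ≤ M' ⊔ 𝓕 s := h2
        _ ≤ M' ⊔ (𝓕 (s - 1) ⊔ M') := sup_le_sup_left h𝓕sub _
        _ = M' ⊔ 𝓕 (s - 1) := by
            rw [sup_comm (𝓕 (s - 1)) M', ← sup_assoc, sup_idem]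
    · refine lt_of_le_of_ne (inf_le_inf_left _ hFs) ?_
      intro hEq
      apply hblock
      intro m hm
      obtain ⟨u, hu, w, hw, hmw⟩ := Submodule.mem_sup.mp (h2 hm)
      have hwm : w = m - u := by rw [← hmw]; abel
      have hwM : w ∈ M ⊓ 𝓕 s := ⟨hwm ▸ sub_mem hm (hM'M hu), hw⟩
      rw [← hEq] at hwM
      exact hmw ▸ Submodule.add_mem _ (Submodule.mem_sup_left hu)
        (Submodule.mem_sup_right hwM.2)
  · rintro ⟨ha, hb⟩
    obtain ⟨x0, hx0s, hx0⟩ := SetLike.exists_of_lt hb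
    have hx0' : x0 ∉ 𝓕 (s - 1) := fun h => hx0 ⟨hx0s.1, h⟩
    have hWne : ¬ (M ⊓ 𝓕 s ≤ 𝓕 (s - 1)) := fun h => hx0' (h hx0s)
    have hW : ∀ x ∈ M ⊓ 𝓕 s, φ x ∈ M ⊓ 𝓕 s :=
      fun x hx => ⟨hφM x hx.1, hφstab s hsn x hx.2⟩
    have hsp := hspread _ hW hWne
    have hM'ltM : M' < M := by
      refine lt_of_le_of_ne hM'M ?_
      intro h
      rw [← h] at hb
      rw [ha] at hb
      exact lt_irrefl _ hb
    have hvmem : v ∈ M' ⊔ 𝓕 s := by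
      apply mem_of_components
      intro i
      obtain ⟨w, hwmem, hwi⟩ := hsp i
      obtain ⟨hwM, hws⟩ := hwmem
      obtain ⟨u, hu, z, hz, hwe⟩ := Submodule.mem_sup.mp (hMle hwM)
      obtain ⟨a, rfl⟩ := Submodule.mem_span_singleton.mp hz
      have hai : a i ≠ 0 := by
        intro h0
        have hδa : (Pi.single i 1 : Fin f → E) * a = 0 := by
          rw [single_mul', one_mul, h0, Pi.single_zero]
        have hww : (Pi.single i 1 : Fin f → E) • w = (Pi.single i 1 : Fin f → E) • u := by
          rw [← hwe, smul_add, smul_smul, hδa, zero_smul, add_zero]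
        have hmem' : (Pi.single i 1 : Fin f → E) • w ∈ M' ⊓ 𝓕 s :=
          ⟨hww ▸ Submodule.smul_mem M' _ hu, Submodule.smul_mem (𝓕 s) _ hws⟩
        rw [ha] at hmem'
        exact hwi hmem'.2
      have hkey : (Pi.single i (a i)⁻¹ : Fin f → E) • (((Pi.single i 1 : Fin f → E) * a) • v)
          = (Pi.single i 1 : Fin f → E) • v := by
        have hmul : (Pi.single i (a i)⁻¹ : Fin f → E) * ((Pi.single i 1 : Fin f → E) * a)
            = Pi.single i 1 := by
          rw [single_mul' i 1 a, one_mul, single_mul' i (a i)⁻¹, Pi.single_eq_same,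
            inv_mul_cancel₀ hai]
        rw [smul_smul, hmul]
      have hsubmem : ((Pi.single i 1 : Fin f → E) * a) • v ∈ M' ⊔ 𝓕 s := by
        have heq : ((Pi.single i 1 : Fin f → E) * a) • v
            = (Pi.single i 1 : Fin f → E) • w - (Pi.single i 1 : Fin f → E) • u := by
          rw [← hwe, smul_add, smul_smul]; abel
        rw [heq]
        exact Submodule.sub_mem _ (Submodule.mem_sup_right (Submodule.smul_mem _ _ hws))
          (Submodule.mem_sup_left (Submodule.smul_mem _ _ hu))
      rw [← hkey]
      exact Submodule.smul_mem _ _ hsubmem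
    refine ⟨hM'ltM, ?_, ?_⟩
    · refine hMle.trans (sup_le le_sup_left ?_)
      exact Submodule.span_le.mpr (by simpa using hvmem)
    · intro j hj1 hjn hle
      by_contra hjs
      push_neg at hjs
      have h𝓕j : 𝓕 j ≤ 𝓕 (s - 1) := F0 j (s - 1) (by omega) hsn'
      have hle' : M ≤ M' ⊔ 𝓕 (s - 1) := hle.trans (sup_le_sup_left h𝓕j _)
      obtain ⟨u, hu, w, hw, hxw⟩ := Submodule.mem_sup.mp (hle' hx0s.1)
      have hu' : u = x0 - w := by rw [← hxw]; abel
      have huM : u ∈ M' ⊓ 𝓕 s := ⟨hu, hu' ▸ sub_mem hx0s.2 (hFs hw)⟩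
      rw [ha] at huM
      exact hx0' (hxw ▸ Submodule.add_mem _ huM.2 hw)
end
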